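/- Let G be a simple graph on a finite vertex type and let e = uv be an edge of G. Then the permanental polynomial of the adjacency matrix satisfies ψ(A(G)) = ψ(A(G − e)) + ψ(A(G − u − v)) + 2·Σ_{C ∈ 𝔠_G(e)} (−1)^{|V(C)|}·ψ(A(G − V(C))). -/

import Mathlib

open Polynomial Matrix

attribute [local instance] Classical.propDecidable

noncomputable section

/-- The permanent of a square matrix: `per M = ∑_{σ} ∏_i M i (σ i)`. -/
def Matrix.per {n R : Type*} [Fintype n] [DecidableEq n] [CommRing R]
    (M : Matrix n n R) : R :=
  ∑ σ : Equiv.Perm n, ∏ i, M i (σ i)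

/-- The characteristic polynomial `φ(M) = det (x·I - M)`. -/
def phi {n R : Type*} [Fintype n] [DecidableEq n] [CommRing R]
    (M : Matrix n n (Polynomial R)) : Polynomial R :=
  ((Polynomial.X : Polynomial R) • (1 : Matrix n n (Polynomial R)) - M).det

/-- The permanental polynomial `ψ(M) = per (x·I - M)`. -/
def psi {n R : Type*} [Fintype n] [DecidableEq n] [CommRing R]
    (M : Matrix n n (Polynomial R)) : Polynomial R :=
  ((Polynomial.X : Polynomial R) • (1 : Matrix n n (Polynomial R)) - M).per

variable {V : Type*}

/-- The principal submatrix of `M` obtained by deleting the rows and columns indexed by `S`. -/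
def delSub {R : Type*} (M : Matrix V V R) (S : Set V) :
    Matrix {w : V // w ∉ S} {w : V // w ∉ S} R :=
  M.submatrix Subtype.val Subtype.val

/-- `C` is a cycle of `G`: a subgraph of `G` that is connected, has nonempty vertex set,
and in which every vertex of `C` has degree exactly `2` in `C`. -/
def IsCycleSub (G : SimpleGraph V) (C : G.Subgraph) : Prop :=
  C.Connected ∧ C.verts.Nonempty ∧ ∀ w ∈ C.verts, (C.neighborSet w).ncard = 2

variable [Fintype V] [DecidableEq V]

/-- The degree diagonal matrix `D(G)` of a graph. -/
def degMat (R : Type*) [CommRing R] (G : SimpleGraph V) [DecidableRel G.Adj] :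
    Matrix V V R :=
  Matrix.diagonal fun w => (G.degree w : R)

/-!
Expand `ψ(A) = per (x I - A)` over permutations `σ`: the term of `σ` is `x` to the number of fixed
points times `-1` to the number of moved points when every moved `i` is adjacent to `σ i`, and `0`
otherwise. Sort the `σ` by whether `σ u = v` and whether `σ v = u`. If neither holds, the terms are
those of `ψ(A(G - e))`. If both hold, `σ = (u v) τ` with `τ` a permutation of `V ∖ {u, v}`, giving
`ψ(A(G - u - v))`. If only `σ u = v`, the cycle of `σ` through `u` is a cyclic permutation running
along a cycle `C` of `G` through `e`, entered along `u → v`, and `σ = c τ` with `τ` a permutation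
of `V ∖ V(C)`, giving `(-1)^|V(C)| ψ(A(G - V(C)))`; a connected `2`-regular subgraph is traversed
in this way by exactly one cyclic permutation. If only `σ v = u`, then `σ⁻¹` is in the previous
case with the same term, since `A` is symmetric.
-/

namespace Equiv.Perm

variable {α : Type*} [Fintype α] [DecidableEq α] {M : Type*} [AddCommMonoid M]

theorem cycleOf_mul_ofSubtype {c : Perm α} (hc : c.IsCycle) {u : α} (hu : c u ≠ u)
    (τ : Perm {x // x ∉ (c.support : Set α)}) : (c * ofSubtype τ).cycleOf u = c := by
  have hfix : ∀ x ∈ c.support, ofSubtype τ x = x := fun x hx =>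
    ofSubtype_apply_of_not_mem τ (not_not.2 (Finset.mem_coe.2 hx))
  have hcomm : Commute c (ofSubtype τ) := Disjoint.commute fun x => by
    by_cases hx : x ∈ c.support
    · exact Or.inr (hfix x hx)
    · exact Or.inl (notMem_support.1 hx)
  rw [cycleOf_mul_of_apply_right_eq_self hcomm u (hfix u (mem_support.2 hu)), hc.cycleOf_eq hu]

theorem sum_cycleOf_eq_sum_ofSubtype {c : Perm α} (hc : c.IsCycle) {u : α} (hu : c u ≠ u)
    (f : Perm α → M) :
    ∑ σ with σ.cycleOf u = c, f σ =
      ∑ τ : Perm {x // x ∉ (c.support : Set α)}, f (c * ofSubtype τ) := by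
  have hfix : ∀ σ : Perm α, σ.cycleOf u = c → ∀ x ∈ c.support, (c⁻¹ * σ) x = x := by
    rintro σ rfl x hx
    rw [mul_apply, inv_eq_iff_eq, (mem_support_cycleOf_iff.1 hx).1.cycleOf_apply]
  have hcompl : ∀ σ : Perm α, σ.cycleOf u = c →
      ∀ x, (c⁻¹ * σ) x ∉ (c.support : Set α) ↔ x ∉ (c.support : Set α) := by
    intro σ hσ x
    refine not_congr ⟨fun hx => ?_, fun hx => by rwa [hfix σ hσ x hx]⟩
    rwa [(c⁻¹ * σ).injective (hfix σ hσ _ hx)] at hx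
  symm
  refine Finset.sum_bij' (fun τ _ => c * ofSubtype τ)
    (fun σ hσ => subtypePerm (c⁻¹ * σ) (hcompl σ (Finset.mem_filter.1 hσ).2)) ?_ ?_ ?_ ?_ ?_
  · intro τ _
    simp [cycleOf_mul_ofSubtype hc hu]
  · intro σ _
    exact Finset.mem_univ _
  · intro τ _
    ext x
    simp
  · intro σ hσ
    rw [ofSubtype_subtypePerm (p := fun x => x ∉ (c.support : Set α))
      _ fun x hx hmem => hx (hfix σ (Finset.mem_filter.1 hσ).2 x hmem), mul_inv_cancel_left]
  · intro τ _
    rfl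

theorem sum_filter_cycleOf_eq_sum_isCycle (u : α) (P : Perm α → Prop) [DecidablePred P]
    (hP : ∀ c, P c → c u ≠ u) (f : Perm α → M) :
    ∑ σ with P (σ.cycleOf u), f σ =
      ∑ c with c.IsCycle ∧ P c, ∑ τ : Perm {x // x ∉ (c.support : Set α)}, f (c * ofSubtype τ) := by
  rw [← Finset.sum_fiberwise_of_maps_to (g := fun σ => σ.cycleOf u)
    (t := Finset.univ.filter fun c => c.IsCycle ∧ P c)]
  · refine Finset.sum_congr rfl fun c hc => ?_
    obtain ⟨hcyc, hPc⟩ := (Finset.mem_filter.1 hc).2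
    rw [← sum_cycleOf_eq_sum_ofSubtype hcyc (hP c hPc), Finset.filter_filter]
    exact Finset.sum_congr (Finset.filter_congr fun σ _ => ⟨And.right, fun h => ⟨h ▸ hPc, h⟩⟩)
      fun _ _ => rfl
  · intro σ hσ
    have hσP := (Finset.mem_filter.1 hσ).2
    have hσu : σ u ≠ u := by simpa using hP _ hσP
    exact Finset.mem_filter.2 ⟨Finset.mem_univ _, isCycle_cycleOf σ hσu, hσP⟩

theorem cycleOf_apply_self_eq_and_iff {σ : Perm α} {u v : α} {p : α → Prop} :
    (σ.cycleOf u u = v ∧ p (σ.cycleOf u v)) ↔ (σ u = v ∧ p (σ v)) := by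
  rw [cycleOf_apply_self]
  refine and_congr_right fun h => ?_
  rw [← h, cycleOf_apply_apply_self]

theorem filter_isCycle_apply_eq_and_apply_eq {u v : α} (huv : u ≠ v) :
    (Finset.univ.filter fun c : Perm α => c.IsCycle ∧ c u = v ∧ c v = u) = {swap u v} := by
  ext c
  simp only [Finset.mem_filter, Finset.mem_univ, true_and, Finset.mem_singleton]
  constructor
  · rintro ⟨hc, rfl, hcv⟩
    exact hc.eq_swap_of_apply_apply_eq_self huv.symm hcv
  · rintro rfl
    exact ⟨isCycle_swap huv, swap_apply_left u v, swap_apply_right u v⟩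

theorem IsCycle.apply_ne_inv_apply {c : Perm α} (hc : c.IsCycle) {u : α} (hu : c (c u) ≠ u)
    {a : α} (ha : a ∈ c.support) : c a ≠ c⁻¹ a := by
  intro h
  have h2 : (c ^ 2) a = a := by simp [pow_two, h]
  have h1 := (hc.pow_eq_one_iff' (mem_support.1 ha)).2 h2
  exact hu (by simpa [pow_two] using congrArg (· u) h1)

end Equiv.Perm

namespace Matrix

open Equiv

/- The `Fintype` instances are implicit so that the lemma can move between the decidability
instances that `S` and `T` happen to carry (e.g. `↑c.support` versus a subgraph's vertex set). -/
theorem per_delSub_congr {n R : Type*} [DecidableEq n] [CommRing R] (M : Matrix n n R)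
    {S T : Set n} (h : S = T) {_ : Fintype {w // w ∉ S}} {_ : Fintype {w // w ∉ T}} :
    (delSub M S).per = (delSub M T).per := by
  subst h
  congr
  exact Subsingleton.elim _ _

variable {n R : Type*} [Fintype n] [CommRing R]

theorem prod_mul_ofSubtype_apply [DecidableEq n] (M : Matrix n n R) (c : Perm n)
    (τ : Perm {x // x ∉ (c.support : Set n)}) :
    ∏ i, M i ((c * Perm.ofSubtype τ) i) =
      (∏ i ∈ c.support, M i (c i)) * ∏ j, delSub M c.support j (τ j) := by
  rw [← Finset.prod_mul_prod_compl c.support,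
    Finset.prod_subtype c.supportᶜ (p := fun x => x ∉ (c.support : Set n)) (fun x => by simp)]
  congr 1
  · refine Finset.prod_congr rfl fun i hi => ?_
    rw [Perm.mul_apply, Perm.ofSubtype_apply_of_not_mem τ (not_not.2 hi)]
  · refine Fintype.prod_congr _ _ fun j => ?_
    rw [Perm.mul_apply, Perm.ofSubtype_apply_coe, Perm.notMem_support.1 (τ j).2]
    rfl

theorem prod_inv_apply_of_isSymm {S : Type*} [CommMonoid S] {M : Matrix n n S} (hM : M.IsSymm)
    (σ : Perm n) :
    ∏ i, M i (σ⁻¹ i) = ∏ i, M i (σ i) := by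
  rw [← Equiv.prod_comp σ]
  simp [hM.apply]

theorem per_eq_sum_of_eq_off_edge [DecidableEq n] {M M' : Matrix n n R} {u v : n}
    (h : ∀ i j, s(i, j) ≠ s(u, v) → M' i j = M i j) (huv : M' u v = 0) (hvu : M' v u = 0) :
    M'.per = ∑ σ : Perm n with σ u ≠ v ∧ σ v ≠ u, ∏ i, M i (σ i) := by
  rw [per, Finset.sum_filter]
  refine Finset.sum_congr rfl fun σ _ => ?_
  split_ifs with hσ
  · refine Finset.prod_congr rfl fun i _ => h i (σ i) ?_
    rw [Ne, Sym2.eq_iff]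
    rintro (⟨rfl, h'⟩ | ⟨rfl, h'⟩)
    exacts [hσ.1 h', hσ.2 h']
  · rcases not_and_or.1 hσ with h' | h'
    · exact Finset.prod_eq_zero (Finset.mem_univ u) (by rwa [not_not.1 h'])
    · exact Finset.prod_eq_zero (Finset.mem_univ v) (by rwa [not_not.1 h'])

theorem sum_prod_filter_apply_eq [DecidableEq n] (M : Matrix n n R) {u v : n} (huv : u ≠ v)
    (p : n → Prop) [DecidablePred p] :
    ∑ σ : Perm n with σ u = v ∧ p (σ v), ∏ i, M i (σ i) =
      ∑ c : Perm n with c.IsCycle ∧ c u = v ∧ p (c v),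
        (∏ i ∈ c.support, M i (c i)) * (delSub M c.support).per := by
  have := Perm.sum_filter_cycleOf_eq_sum_isCycle u (fun c => c u = v ∧ p (c v))
    (fun c h => h.1 ▸ huv.symm) fun σ => ∏ i, M i (σ i)
  rw [Finset.filter_congr fun σ _ => Perm.cycleOf_apply_self_eq_and_iff] at this
  simp only [this, prod_mul_ofSubtype_apply, ← Finset.mul_sum]
  rfl

theorem per_edge_expansion_of_isSymm [DecidableEq n] {M : Matrix n n R} (hM : M.IsSymm) {u v : n}
    (huv : u ≠ v) :
    M.per = ∑ σ : Perm n with σ u ≠ v ∧ σ v ≠ u, ∏ i, M i (σ i)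
      + M u v * M v u * (delSub M {u, v}).per
      + 2 * ∑ c : Perm n with c.IsCycle ∧ c u = v ∧ c v ≠ u,
        (∏ i ∈ c.support, M i (c i)) * (delSub M c.support).per := by
  have hTT : ∑ σ : Perm n with σ u = v ∧ σ v = u, ∏ i, M i (σ i) =
      M u v * M v u * (delSub M {u, v}).per := by
    rw [sum_prod_filter_apply_eq M huv (· = u), Perm.filter_isCycle_apply_eq_and_apply_eq huv,
      Finset.sum_singleton, Perm.support_swap huv, Finset.prod_pair huv, swap_apply_left,
      swap_apply_right, per_delSub_congr M Finset.coe_pair]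
  have hTF := sum_prod_filter_apply_eq M huv (· ≠ u)
  have hFT : ∑ σ : Perm n with σ u ≠ v ∧ σ v = u, ∏ i, M i (σ i) =
      ∑ σ : Perm n with σ u = v ∧ σ v ≠ u, ∏ i, M i (σ i) := by
    refine Finset.sum_nbij' (·⁻¹) (·⁻¹) ?_ ?_ (fun σ _ => inv_inv σ) (fun σ _ => inv_inv σ)
      fun σ _ => (prod_inv_apply_of_isSymm hM σ).symm
    all_goals
      intro σ hσ
      simp only [Finset.mem_filter, Finset.mem_univ, true_and] at hσ ⊢
    · exact ⟨Perm.inv_eq_iff_eq.2 hσ.2.symm, fun h => hσ.1 (Perm.inv_eq_iff_eq.1 h).symm⟩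
    · exact ⟨fun h => hσ.2 (Perm.inv_eq_iff_eq.1 h).symm, Perm.inv_eq_iff_eq.2 hσ.1.symm⟩
  have hsplit := Finset.sum_filter_add_sum_filter_not Finset.univ (fun σ : Perm n => σ u = v)
    fun σ => ∏ i, M i (σ i)
  have hsplit₁ := Finset.sum_filter_add_sum_filter_not
    (Finset.univ.filter fun σ : Perm n => σ u = v) (fun σ => σ v = u) fun σ => ∏ i, M i (σ i)
  have hsplit₂ := Finset.sum_filter_add_sum_filter_not
    (Finset.univ.filter fun σ : Perm n => ¬σ u = v) (fun σ => σ v = u) fun σ => ∏ i, M i (σ i)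
  simp only [Finset.filter_filter, ← ne_eq] at hsplit₁ hsplit₂
  rw [per]
  linear_combination -hsplit - hsplit₁ - hsplit₂ + hTT + hFT + 2 * hTF

end Matrix

section AdjMatrix

open Equiv SimpleGraph

variable {W R : Type*} [DecidableEq W] [CommRing R] (H : SimpleGraph W) [DecidableRel H.Adj]

theorem X_smul_one_sub_adjMatrix_apply (i j : W) :
    ((X : R[X]) • (1 : Matrix W W R[X]) - H.adjMatrix R[X]) i j =
      if i = j then X else if H.Adj i j then -1 else 0 := by
  by_cases h : i = j
  · subst h
    simp
  · by_cases hadj : H.Adj i j <;> simp [h, hadj, Matrix.one_apply_ne h]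

theorem isSymm_X_smul_one_sub_adjMatrix :
    ((X : R[X]) • (1 : Matrix W W R[X]) - H.adjMatrix R[X]).IsSymm :=
  (Matrix.isSymm_one.smul (X : R[X])).sub H.isSymm_adjMatrix

theorem prod_support_X_smul_one_sub_adjMatrix [Fintype W] (c : Perm W) :
    ∏ i ∈ c.support, ((X : R[X]) • (1 : Matrix W W R[X]) - H.adjMatrix R[X]) i (c i) =
      if ∀ i ∈ c.support, H.Adj i (c i) then (-1) ^ c.support.card else 0 := by
  have hne : ∀ i ∈ c.support, i ≠ c i := fun i hi => Ne.symm (Perm.mem_support.1 hi)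
  split_ifs with h
  · rw [← Finset.prod_const]
    refine Finset.prod_congr rfl fun i hi => ?_
    rw [X_smul_one_sub_adjMatrix_apply, if_neg (hne i hi), if_pos (h i hi)]
  · push Not at h
    obtain ⟨i, hi, hadj⟩ := h
    refine Finset.prod_eq_zero hi ?_
    rw [X_smul_one_sub_adjMatrix_apply, if_neg (hne i hi), if_neg hadj]

theorem psi_delSub (A : Matrix W W R[X]) (S : Set W) [Fintype {w // w ∉ S}] :
    psi (delSub A S) = (delSub ((X : R[X]) • 1 - A) S).per := by
  unfold psi delSub
  congr 1
  ext i j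
  simp [Matrix.one_apply, Subtype.ext_iff]

theorem psi_deleteEdges [Fintype W] {u v : W} (huv : u ≠ v)
    [DecidableRel (H.deleteEdges {s(u, v)}).Adj] :
    psi ((H.deleteEdges {s(u, v)}).adjMatrix R[X]) =
      ∑ σ : Perm W with σ u ≠ v ∧ σ v ≠ u, ∏ i, ((X : R[X]) • 1 - H.adjMatrix R[X]) i (σ i) := by
  refine Matrix.per_eq_sum_of_eq_off_edge (fun i j hij => ?_) ?_ ?_ <;>
    simp only [X_smul_one_sub_adjMatrix_apply, deleteEdges_adj, Set.mem_singleton_iff]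
  · simp [hij]
  · simp [huv]
  · simp [huv.symm, Sym2.eq_swap]

end AdjMatrix

namespace SimpleGraph.Walk

open Equiv

variable {α : Type*} [Fintype α] [DecidableEq α] {G : SimpleGraph α} {u : α} {p : G.Walk u u}

theorem IsCycle.exists_isCycle_perm (hp : p.IsCycle) :
    ∃ c : Perm α, c.IsCycle ∧ (c.support : Set α) = p.toSubgraph.verts ∧ c u = p.snd ∧
      ∀ a ∈ c.support, G.Adj a (c a) := by
  set l := p.support.tail
  have hl : l.Nodup := hp.support_nodup
  have hlen : l.length = p.length := by simp [l]
  have h3 := hp.three_le_length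
  have hget : ∀ i (h : i < l.length), l[i] = p.getVert (i + 1) := by
    intro i h
    simp [l, List.getElem_tail, support_getElem_eq_getVert]
  have hlast : l[p.length - 1]'(by omega) = u := by
    rw [hget, Nat.sub_add_cancel (by omega), getVert_length]
  have hsucc : ∀ i (h : i < l.length), G.Adj l[i] (l.formPerm l[i]) := by
    intro i h
    rw [List.formPerm_apply_getElem l hl, hget, hget]
    rcases Nat.lt_or_ge (i + 1) p.length with hi | hi
    · rw [Nat.mod_eq_of_lt (by omega)]
      exact p.adj_getVert_succ hi
    · have hi' : i + 1 = p.length := by omega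
      rw [hlen, hi', Nat.mod_self, getVert_length]
      exact p.adj_snd hp.not_nil
  have hsupp : l.formPerm.support = l.toFinset :=
    List.support_formPerm_of_nodup l hl fun x hx => by simp [hx] at hlen; omega
  refine ⟨l.formPerm, List.isCycle_formPerm hl (by omega), ?_, ?_, ?_⟩
  · rw [hsupp, verts_toSubgraph]
    ext x
    simp only [List.coe_toFinset, Set.mem_ofPred_eq, p.mem_support_iff]
    exact ⟨Or.inr, fun h => h.elim (fun hx => hx ▸ end_mem_tail_support hp.not_nil) id⟩
  · conv_lhs => rw [← hlast]
    rw [List.formPerm_apply_getElem l hl]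
    simp only [hlen, Nat.sub_add_cancel (show 1 ≤ p.length by omega), Nat.mod_self, hget]
  · intro a ha
    rw [hsupp, List.mem_toFinset] at ha
    obtain ⟨i, hi, rfl⟩ := List.mem_iff_getElem.1 ha
    exact hsucc i hi

end SimpleGraph.Walk

namespace SimpleGraph

open Equiv

variable {α : Type*}

def Subgraph.ofPerm (G : SimpleGraph α) (c : Perm α) : G.Subgraph where
  verts := {a | c a ≠ a}
  Adj a b := G.Adj a b ∧ (c a = b ∨ c b = a)
  adj_sub h := h.1
  edge_vert := by
    rintro a b ⟨hab, rfl | rfl⟩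
    · exact fun h => hab.ne h.symm
    · exact fun h => hab.ne (c.injective h)
  symm := ⟨fun _ _ h => ⟨h.1.symm, h.2.symm⟩⟩

namespace Subgraph

variable [Fintype α] [DecidableEq α] {G : SimpleGraph α} {c : Perm α}

theorem ofPerm_verts : (ofPerm G c).verts = c.support := by
  ext
  simp [ofPerm]

theorem neighborSet_ofPerm (hG : ∀ a ∈ c.support, G.Adj a (c a)) {a : α} (ha : a ∈ c.support) :
    (ofPerm G c).neighborSet a = {c a, c⁻¹ a} := by
  ext b
  simp only [mem_neighborSet, ofPerm, Set.mem_insert_iff, Set.mem_singleton_iff,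
    Perm.eq_inv_iff_eq]
  refine ⟨fun h => h.2.imp Eq.symm id, ?_⟩
  rintro (rfl | rfl)
  · exact ⟨hG a ha, Or.inl rfl⟩
  · have := hG b (Perm.apply_mem_support.1 ha)
    exact ⟨this.symm, Or.inr rfl⟩

theorem ofPerm_connected (hc : c.IsCycle) (hG : ∀ a ∈ c.support, G.Adj a (c a)) :
    (ofPerm G c).Connected := by
  obtain ⟨x, hx, -⟩ := id hc
  have hreach : ∀ (k : ℕ) (hk : (c ^ k) x ∈ (ofPerm G c).verts),
      (ofPerm G c).coe.Reachable ⟨x, hx⟩ ⟨_, hk⟩ := by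
    intro k
    induction k with
    | zero => exact fun _ => Reachable.refl _
    | succ k ih =>
      intro hk
      have hk' : (c ^ k) x ∈ c.support := Perm.pow_apply_mem_support.2 (Perm.mem_support.2 hx)
      refine (ih (Perm.mem_support.1 hk')).trans (Adj.reachable ?_)
      show (ofPerm G c).Adj ((c ^ k) x) ((c ^ (k + 1)) x)
      rw [pow_succ', Perm.mul_apply]
      exact ⟨hG _ hk', Or.inl rfl⟩
  rw [Subgraph.connected_iff', connected_iff_exists_forall_reachable]
  refine ⟨⟨x, hx⟩, fun ⟨y, hy⟩ => ?_⟩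
  obtain ⟨k, rfl⟩ := hc.exists_pow_eq hx hy
  exact hreach k hy

theorem ncard_neighborSet_ofPerm (hc : c.IsCycle) {u : α} (hu : c (c u) ≠ u)
    (hG : ∀ a ∈ c.support, G.Adj a (c a)) {a : α} (ha : a ∈ c.support) :
    ((ofPerm G c).neighborSet a).ncard = 2 := by
  rw [neighborSet_ofPerm hG ha, Set.ncard_pair (hc.apply_ne_inv_apply hu ha)]

theorem isCycleSub_ofPerm (hc : c.IsCycle) {u : α} (hu : c (c u) ≠ u)
    (hG : ∀ a ∈ c.support, G.Adj a (c a)) : IsCycleSub G (ofPerm G c) :=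
  ⟨ofPerm_connected hc hG, ⟨u, fun h => hu (by rw [h, h])⟩,
    fun _ ha => ncard_neighborSet_ofPerm hc hu hG (Perm.mem_support.2 ha)⟩

theorem eq_of_ofPerm_eq {c₁ c₂ : Perm α} (hc₁ : c₁.IsCycle) (hc₂ : c₂.IsCycle) {u : α}
    (hu₁ : c₁ (c₁ u) ≠ u) (hu₂ : c₂ (c₂ u) ≠ u) (hG₁ : ∀ a ∈ c₁.support, G.Adj a (c₁ a))
    (hG₂ : ∀ a ∈ c₂.support, G.Adj a (c₂ a)) (hu : c₁ u = c₂ u)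
    (h : ofPerm G c₁ = ofPerm G c₂) : c₁ = c₂ := by
  have hsupp : c₁.support = c₂.support := by
    have := congrArg Subgraph.verts h
    rwa [ofPerm_verts, ofPerm_verts, Finset.coe_inj] at this
  -- `c₂` cannot turn back at `c₁ a`, so it agrees with `c₁` there as soon as it does at `a`
  have hstep : ∀ a ∈ c₁.support, c₂ a = c₁ a → c₂ (c₁ a) = c₁ (c₁ a) := by
    intro a ha hA
    have hb : c₁ a ∈ c₁.support := Perm.apply_mem_support.2 ha
    have hmem : c₂ (c₁ a) ∈ (ofPerm G c₁).neighborSet (c₁ a) := by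
      rw [h, neighborSet_ofPerm hG₂ (hsupp ▸ hb)]
      exact Set.mem_insert _ _
    rw [neighborSet_ofPerm hG₁ hb, Perm.inv_eq_iff_eq.2 rfl] at hmem
    refine hmem.resolve_right fun h' => hc₂.apply_ne_inv_apply hu₂ (hsupp ▸ hb) ?_
    rw [h', ← hA, Perm.inv_eq_iff_eq.2 rfl]
  have hu_mem : u ∈ c₁.support := Perm.mem_support.2 fun h => hu₁ (by rw [h, h])
  have hpow : ∀ k : ℕ, c₂ ((c₁ ^ k) u) = c₁ ((c₁ ^ k) u) := by
    intro k
    induction k with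
    | zero => exact hu.symm
    | succ k ih =>
      rw [pow_succ', Perm.mul_apply]
      exact hstep _ (Perm.pow_apply_mem_support.2 hu_mem) ih
  refine (Perm.support_congr hsupp.ge fun x hx => ?_).symm
  obtain ⟨k, rfl⟩ := hc₁.exists_pow_eq (Perm.mem_support.1 hu_mem) (Perm.mem_support.1 hx)
  exact hpow k

theorem _root_.IsCycleSub.exists_isCycle_perm {C : G.Subgraph} (hC : IsCycleSub G C) {u v : α}
    (huv : C.Adj u v) :
    ∃ c : Perm α, c.IsCycle ∧ (c.support : Set α) = C.verts ∧ c u = v ∧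
      ∀ a ∈ c.support, C.Adj a (c a) := by
  obtain ⟨hconn, -, hdeg⟩ := hC
  -- `C` is `2`-regular on its vertices, so its component through `u` is traced by a cycle walk,
  -- which is oriented along `uv` and read off as a permutation.
  have hcycles : C.spanningCoe.IsCycles := fun w ⟨_, hx⟩ => hdeg w (C.edge_vert hx)
  have hsupp : (C.spanningCoe.connectedComponentMk u).supp = C.verts := by
    ext x
    rw [ConnectedComponent.mem_supp_iff, ConnectedComponent.eq]
    refine ⟨fun ⟨p⟩ => ?_, fun hx => ?_⟩
    · cases p with
      | nil => exact huv.fst_mem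
      | cons h _ => exact C.edge_vert h
    · exact (hconn ⟨x, hx⟩ ⟨u, huv.fst_mem⟩).map C.coeEmbeddingSpanningCoe.toHom
  obtain ⟨p, hp, hpv⟩ := hcycles.exists_cycle_toSubgraph_verts_eq_connectedComponentSupp
    ConnectedComponent.connectedComponentMk_mem ⟨v, huv⟩
  obtain ⟨q, hq, hqv, hqp⟩ := hp.exists_isCycle_snd_verts_eq
    ((hp.adj_toSubgraph_iff_of_isCycles hcycles p.start_mem_verts_toSubgraph v).2 huv)
  obtain ⟨c, hc, hcs, hcu, hadj⟩ := hq.exists_isCycle_perm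
  exact ⟨c, hc, hcs.trans (hqp.trans (hpv.trans hsupp)), hcu.trans hqv, hadj⟩

theorem apply_ne_of_isCycleSub {C : G.Subgraph} (hC : IsCycleSub G C) {c : Perm α}
    (hc : c.IsCycle) (hcs : (c.support : Set α) = C.verts) {u v : α} (huv : C.Adj u v)
    (hcu : c u = v) : c v ≠ u := by
  intro hcv
  have hswap : c = swap u v := hcu ▸ hc.eq_swap_of_apply_apply_eq_self (hcu ▸ huv.ne.symm)
    (by rw [hcu, hcv])
  have hN : C.neighborSet u ⊆ {v} := fun w hw => by
    have hw' : w ∈ (c.support : Set α) := hcs ▸ C.edge_vert (C.adj_symm hw)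
    rw [hswap, Perm.support_swap huv.ne, Finset.coe_pair] at hw'
    exact hw'.resolve_left hw.ne.symm
  have := Set.ncard_le_ncard hN (Set.finite_singleton v)
  rw [hC.2.2 u huv.fst_mem, Set.ncard_singleton] at this
  omega

theorem ofPerm_eq {C : G.Subgraph} (hC : IsCycleSub G C) {c : Perm α} (hc : c.IsCycle) {u : α}
    (hu : c (c u) ≠ u) (hcs : (c.support : Set α) = C.verts)
    (hadj : ∀ a ∈ c.support, C.Adj a (c a)) : ofPerm G c = C := by
  have hG : ∀ a ∈ c.support, G.Adj a (c a) := fun a ha => C.adj_sub (hadj a ha)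
  have hle : ofPerm G c ≤ C := by
    refine ⟨fun a ha => hcs ▸ Perm.mem_support.2 ha, ?_⟩
    rintro a b ⟨hab, rfl | rfl⟩
    · exact hadj a (Perm.mem_support.2 hab.ne.symm)
    · exact (hadj b (Perm.mem_support.2 hab.ne)).symm
  refine le_antisymm hle ⟨fun a ha => ?_, fun a b hab => ?_⟩
  · rw [ofPerm_verts, hcs]
    exact ha
  · have ha : a ∈ c.support := by rw [← Finset.mem_coe, hcs]; exact hab.fst_mem
    have hN : (ofPerm G c).neighborSet a = C.neighborSet a :=
      Set.eq_of_subset_of_ncard_le (fun _ h => hle.2 h)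
        (by rw [hC.2.2 a hab.fst_mem, ncard_neighborSet_ofPerm hc hu hG ha])
    exact (hN ▸ hab : b ∈ (ofPerm G c).neighborSet a)

theorem bijOn_ofPerm (u v : α) :
    Set.BijOn (ofPerm G)
      {c | (c.IsCycle ∧ c u = v ∧ c v ≠ u) ∧ ∀ a ∈ c.support, G.Adj a (c a)}
      {C | IsCycleSub G C ∧ C.Adj u v} := by
  refine ⟨?_, ?_, ?_⟩
  · rintro c ⟨⟨hc, hcu, hcv⟩, hG⟩
    have hu : c u ≠ u := fun h => hcv (by rw [← hcu, h, h])
    exact ⟨isCycleSub_ofPerm hc (u := u) (by rwa [hcu]) hG,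
      hcu ▸ hG u (Perm.mem_support.2 hu), Or.inl hcu⟩
  · rintro c₁ ⟨⟨hc₁, hcu₁, hcv₁⟩, hG₁⟩ c₂ ⟨⟨hc₂, hcu₂, hcv₂⟩, hG₂⟩ h
    exact eq_of_ofPerm_eq hc₁ hc₂ (by rwa [hcu₁]) (by rwa [hcu₂]) hG₁ hG₂ (hcu₁.trans hcu₂.symm) h
  · rintro C ⟨hC, huv⟩
    obtain ⟨c, hc, hcs, hcu, hadj⟩ := hC.exists_isCycle_perm huv
    have hcv := apply_ne_of_isCycleSub hC hc hcs huv hcu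
    exact ⟨c, ⟨⟨hc, hcu, hcv⟩, fun a ha => C.adj_sub (hadj a ha)⟩,
      ofPerm_eq hC hc (by rwa [hcu]) hcs hadj⟩

end Subgraph

variable [Fintype α] [DecidableEq α] {R : Type*} [CommRing R]

theorem sum_isCycle_eq_finsum_isCycleSub (G : SimpleGraph α) [DecidableRel G.Adj] (u v : α) :
    ∑ c : Perm α with c.IsCycle ∧ c u = v ∧ c v ≠ u,
        (∏ i ∈ c.support, ((X : R[X]) • (1 : Matrix α α R[X]) - G.adjMatrix R[X]) i (c i)) *
          (delSub ((X : R[X]) • 1 - G.adjMatrix R[X]) c.support).per =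
      ∑ᶠ C ∈ {C : G.Subgraph | IsCycleSub G C ∧ C.Adj u v},
        (-1 : R[X]) ^ C.verts.ncard * psi (delSub (G.adjMatrix R[X]) C.verts) := by
  simp only [prod_support_X_smul_one_sub_adjMatrix, ite_mul, zero_mul]
  rw [← Finset.sum_filter, Finset.filter_filter, ← finsum_mem_coe_finset, Finset.coe_filter_univ]
  refine finsum_mem_eq_of_bijOn _ (Subgraph.bijOn_ofPerm u v) fun c _ => ?_
  rw [psi_delSub, Matrix.per_delSub_congr _ Subgraph.ofPerm_verts, Subgraph.ofPerm_verts,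
    Set.ncard_coe_finset]

end SimpleGraph

theorem adjacency_permanental_edge_recursion
    {V : Type*} [Fintype V] [DecidableEq V]
    (G : SimpleGraph V) [DecidableRel G.Adj] (u v : V) (he : G.Adj u v) :
    psi (G.adjMatrix (Polynomial ℤ)) =
      psi ((G.deleteEdges {s(u, v)}).adjMatrix (Polynomial ℤ))
        + psi (delSub (G.adjMatrix (Polynomial ℤ)) {u, v})
        + 2 * ∑ᶠ C ∈ {C : G.Subgraph | IsCycleSub G C ∧ C.Adj u v},
          (-1 : Polynomial ℤ) ^ C.verts.ncard * psi (delSub (G.adjMatrix (Polynomial ℤ)) C.verts) := by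
  have hswap : ((X : ℤ[X]) • (1 : Matrix V V ℤ[X]) - G.adjMatrix ℤ[X]) u v *
      ((X : ℤ[X]) • (1 : Matrix V V ℤ[X]) - G.adjMatrix ℤ[X]) v u = 1 := by
    simp [he, he.symm, he.ne, he.ne.symm]
  rw [psi_deleteEdges G he.ne, psi_delSub, ← G.sum_isCycle_eq_finsum_isCycleSub, psi,
    Matrix.per_edge_expansion_of_isSymm (isSymm_X_smul_one_sub_adjMatrix G) he.ne, hswap, one_mul]
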